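/- Guard-preserving extension: let C = S₁ ∩ S₂ with S₂ \ S₁ infinite, let σ be a substitution into S₁ and σ̄ a substitution into S₂ with σ ⋈_C σ̄, and let g be a guard with constants in C and variables contained in dom(σ) ∪ V for some finite set V of variables disjoint from dom(σ). If there exists γ : V → S₁ with (σ ⊎ γ) ⊨ g, then there exists γ̄ : V → S₂ with (σ̄ ⊎ γ̄) ⊨ g and (σ ⊎ γ) ⋈_C (σ̄ ⊎ γ̄). -/

import Mathlib

noncomputable section
open Classical

/-- A substitution: a partial map from variables to letters. -/
def dom {X A : Type*} (σ : X → Option A) : Set X := {x | σ x ≠ none}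

def codom {X A : Type*} (σ : X → Option A) : Set A := {a | ∃ x, σ x = some a}

/-- C-coherence of two substitutions with equal domains. -/
def Coh {X A : Type*} (C : Set A) (σ' σ : X → Option A) : Prop :=
  dom σ' = dom σ ∧
  (∀ x a b, σ' x = some a → σ x = some b →
      (a ∈ C ↔ b ∈ C) ∧ ((a ∈ C ∨ b ∈ C) → a = b)) ∧
  (∀ x y a b a' b', σ' x = some a → σ' y = some b →
      σ x = some a' → σ y = some b' → (a = b ↔ a' = b'))

/-- Union of two substitutions (intended for disjoint domains). -/
def union {X A : Type*} (σ γ : X → Option A) : X → Option A :=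
  fun x => match σ x with | some a => some a | none => γ x

/-- Restriction of a substitution to a set of variables. -/
def restrict {X A : Type*} (σ : X → Option A) (D : Set X) : X → Option A :=
  fun x => if x ∈ D then σ x else none

/-- The singleton substitution {x ↦ a}. -/
def single {X A : Type*} (x : X) (a : A) : X → Option A :=
  fun z => if z = x then some a else none

/-- Atomic guard: (a = x) with a a constant, or (x = y) between variables. -/
inductive Atom (X A : Type*) where
  | const : A → X → Atom X A
  | eq : X → X → Atom X A

/-- A guard is a finite conjunction (list) of atoms. -/
abbrev Guard (X A : Type*) := List (Atom X A)

def atomVars {X A : Type*} : Atom X A → Set X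
  | Atom.const _ x => {x}
  | Atom.eq x y => {x, y}

def atomConsts {X A : Type*} : Atom X A → Set A
  | Atom.const a _ => {a}
  | Atom.eq _ _ => ∅

/-- The variables occurring in a guard. -/
def gvars {X A : Type*} (g : Guard X A) : Set X := {x | ∃ t ∈ g, x ∈ atomVars t}

/-- The constants occurring in a guard. -/
def gconsts {X A : Type*} (g : Guard X A) : Set A := {a | ∃ t ∈ g, a ∈ atomConsts t}

/-- A (partial) substitution satisfies a guard if every atom holds (all values defined). -/
def sat {X A : Type*} (σ : X → Option A) (g : Guard X A) : Prop :=
  ∀ t ∈ g, match t with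
    | Atom.const a x => σ x = some a
    | Atom.eq x y => σ x ≠ none ∧ σ x = σ y

/-!
Coherence is exactly the statement that `σ'` is `σ` followed by a renaming of values: a map
`f` that fixes `C` pointwise and is injective on `codom σ ∪ C`. Such a renaming preserves every
guard with constants in `C`, and coherence with the renamed substitution. Since `S₂ \ S₁` is
infinite and `codom σ'` finite, `f` extends to the finitely many values of `γ` outside
`codom σ ∪ C` by sending them injectively to fresh letters of `S₂ \ S₁`; then `γ' := f ∘ γ`.
-/

open Set

section

variable {X A : Type*}

lemma dom_comp_map {B : Type*} (f : A → B) (τ : X → Option A) :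
    dom (Option.map f ∘ τ) = dom τ := by
  ext x
  simp [dom]

lemma codom_comp_map {B : Type*} (f : A → B) (τ : X → Option A) :
    codom (Option.map f ∘ τ) = f '' codom τ := by
  ext b
  simp only [codom, Function.comp_apply, Option.map_eq_some_iff, mem_ofPred_eq, mem_image]
  exact ⟨fun ⟨x, a, hx, hab⟩ => ⟨a, ⟨x, hx⟩, hab⟩, fun ⟨a, ⟨x, hx⟩, hab⟩ => ⟨x, a, hx, hab⟩⟩

lemma comp_map_congr {B : Type*} {f f' : A → B} {τ : X → Option A} (h : EqOn f f' (codom τ)) :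
    Option.map f ∘ τ = Option.map f' ∘ τ := by
  funext x
  cases hx : τ x with
  | none => simp [hx]
  | some a => simp [hx, h ⟨x, hx⟩]

lemma union_comp_map {B : Type*} (f : A → B) (σ γ : X → Option A) :
    union (Option.map f ∘ σ) (Option.map f ∘ γ) = Option.map f ∘ union σ γ := by
  funext x
  cases hx : σ x <;> simp [union, hx]

lemma codom_union_subset (σ γ : X → Option A) : codom (union σ γ) ⊆ codom σ ∪ codom γ := by
  rintro a ⟨x, hx⟩
  cases hσx : σ x with
  | none => simp only [union, hσx] at hx; exact Or.inr ⟨x, hx⟩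
  | some b => simp only [union, hσx] at hx; exact Or.inl ⟨x, hσx.trans hx⟩

lemma codom_finite {τ : X → Option A} (h : (dom τ).Finite) : (codom τ).Finite := by
  refine ((h.image τ).preimage (Option.some_injective A).injOn).subset ?_
  rintro a ⟨x, hx⟩
  exact ⟨x, by simp [dom, hx], hx⟩

lemma sat_comp_map {f : A → A} {τ : X → Option A} {g : Guard X A}
    (hfix : EqOn f id (gconsts g)) (h : sat τ g) : sat (Option.map f ∘ τ) g := by
  intro t ht
  have ht' := h t ht
  cases t with
  | const a x =>
    simp only [Function.comp_apply] at ht' ⊢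
    rw [ht', Option.map_some, hfix ⟨_, ht, rfl⟩, id]
  | eq x y =>
    simp only [Function.comp_apply, ne_eq, Option.map_eq_none_iff] at ht' ⊢
    exact ⟨ht'.1, by rw [ht'.2]⟩

section Renaming

variable {f : A → A} {s C : Set A}

lemma injOn_union_of_eqOn_id (hfix : EqOn f id C) (hinj : InjOn f s)
    (hout : MapsTo f (s \ C) Cᶜ) : InjOn f (s ∪ C) := by
  have key : ∀ a ∈ s, ∀ b ∈ C, f a = f b → a = b := fun a ha b hb hab => by
    by_cases haC : a ∈ C
    · rwa [hfix haC, hfix hb] at hab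
    · exact absurd (hab.trans (hfix hb) ▸ hb) (hout ⟨ha, haC⟩)
  rintro a (ha | ha) b (hb | hb) hab
  exacts [hinj ha hb hab, key a ha b hb hab, (key b hb a ha hab.symm).symm,
    by rwa [hfix ha, hfix hb] at hab]

lemma mem_of_apply_mem (hfix : EqOn f id C) (hinj : InjOn f (s ∪ C)) {a : A} (ha : a ∈ s)
    (hfa : f a ∈ C) : a ∈ C :=
  hinj (Or.inl ha) (Or.inr hfa) (hfix hfa).symm ▸ hfa

lemma coh_comp_map {τ : X → Option A} (hfix : EqOn f id C) (hinj : InjOn f (codom τ ∪ C)) :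
    Coh C τ (Option.map f ∘ τ) := by
  have hval : ∀ {x a b}, τ x = some a → (Option.map f ∘ τ) x = some b → b = f a :=
    fun hx hb => by simpa [hx] using hb.symm
  refine ⟨(dom_comp_map f τ).symm, fun x a b hx hb => ?_, fun x y a b a' b' hx hy hx' hy' => ?_⟩
  · obtain rfl := hval hx hb
    have hC : f a ∈ C → a ∈ C := mem_of_apply_mem hfix hinj ⟨x, hx⟩
    refine ⟨⟨fun haC => (hfix haC).symm ▸ haC, hC⟩, fun h => (hfix (h.elim id hC)).symm⟩
  · obtain rfl := hval hx hx'
    obtain rfl := hval hy hy'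
    exact ⟨congrArg f, fun h => hinj (Or.inl ⟨x, hx⟩) (Or.inl ⟨y, hy⟩) h⟩

lemma Coh.exists_eq_comp_map {σ σ' : X → Option A} (h : Coh C σ σ') :
    ∃ f : A → A, EqOn f id C ∧ InjOn f (codom σ ∪ C) ∧ σ' = Option.map f ∘ σ := by
  obtain ⟨hdom, hval, hpat⟩ := h
  have hdef : ∀ {x a}, σ x = some a → ∃ b, σ' x = some b := fun {x a} hx => by
    have : x ∈ dom σ' := hdom ▸ (show σ x ≠ none by simp [hx])
    exact Option.ne_none_iff_exists'.mp this
  let f : A → A := fun a => if h : a ∈ codom σ \ C then (σ' h.1.choose).getD a else a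
  have hfix : EqOn f id C := fun a ha => dif_neg fun h => h.2 ha
  -- Any preimage of `a` serves as witness: by the equality-pattern clause they all agree.
  have hmap : ∀ {x a}, σ x = some a → σ' x = some (f a) := fun {x a} hx => by
    obtain ⟨b, hb⟩ := hdef hx
    by_cases haC : a ∈ C
    · rw [hb, hfix haC, (hval x a b hx hb).2 (Or.inl haC)]; rfl
    · have hw : a ∈ codom σ \ C := ⟨⟨x, hx⟩, haC⟩
      obtain ⟨b₀, hb₀⟩ := hdef hw.1.choose_spec
      have hbb : b = b₀ := (hpat x _ a a b b₀ hx hw.1.choose_spec hb hb₀).1 rfl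
      simp only [f, dif_pos hw, hb₀, Option.getD_some, hb, hbb]
  refine ⟨f, hfix, injOn_union_of_eqOn_id hfix ?_ ?_, funext fun x => ?_⟩
  · rintro a ⟨x, hx⟩ b ⟨y, hy⟩ hab
    exact (hpat x y a b (f a) (f b) hx hy (hmap hx) (hmap hy)).2 hab
  · rintro a ⟨⟨x, hx⟩, haC⟩ hfa
    exact haC ((hval x a (f a) hx (hmap hx)).1.2 hfa)
  · cases hx : σ x with
    | some a => exact (hmap hx).trans (by simp [hx])
    | none => simpa [dom, hx] using (Set.ext_iff.mp hdom x).not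

lemma exists_injOn_extension_of_infinite (hfix : EqOn f id C) (hinj : InjOn f (s ∪ C)) {D T : Set A}
    (hD : D.Finite) (hT : T.Infinite) (hTC : Disjoint T C) (hTs : Disjoint T (f '' s)) :
    ∃ f' : A → A, EqOn f' f (s ∪ C) ∧ InjOn f' (s ∪ C ∪ D) ∧ MapsTo f' D (f '' s ∪ C ∪ T) := by
  have : Nonempty A := hT.nonempty.to_subtype.map Subtype.val
  obtain ⟨g, hgT, hg⟩ := (hD.sdiff (t := s ∪ C)).exists_injOn_of_encard_le
    (by rw [hT.encard_eq]; exact le_top)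
  let f' := (D \ (s ∪ C)).piecewise g f
  have hf'f : EqOn f' f (s ∪ C) := fun a ha => piecewise_eq_of_notMem _ _ _ fun h => h.2 ha
  have hf'g : EqOn f' g (D \ (s ∪ C)) := piecewise_eqOn _ _ _
  have hold : ∀ a ∈ s ∪ C, f' a ∈ f '' s ∪ C := fun a ha => by
    rw [hf'f ha]
    rcases ha with ha | ha
    exacts [Or.inl (mem_image_of_mem f ha), Or.inr ((hfix ha).symm ▸ ha)]
  refine ⟨f', hf'f, ?_, fun a ha => ?_⟩
  · rw [← union_sdiff_self, injOn_union disjoint_sdiff_right]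
    refine ⟨hinj.congr hf'f.symm, hg.congr hf'g.symm, fun a ha b hb hab => ?_⟩
    have hbT : f' b ∈ T := hf'g hb ▸ hgT hb
    exact (hold a ha).elim (hTs.ne_of_mem hbT · hab.symm) (hTC.ne_of_mem hbT · hab.symm)
  · by_cases has : a ∈ s ∪ C
    · exact Or.inl (hold a has)
    · exact Or.inr (hf'g ⟨ha, has⟩ ▸ hgT ⟨ha, has⟩)

end Renaming

end

theorem stmt_14_general {X A : Type*} (S₁ S₂ : Set A) (C : Set A) (hC : C = S₁ ∩ S₂)
    (hinf : (S₂ \ S₁).Infinite)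
    (σ σ' : X → Option A)
    (hσ' : codom σ' ⊆ S₂)
    (hfin : (dom σ).Finite)
    (hcoh : Coh C σ σ')
    (g : Guard X A) (hc : gconsts g ⊆ C)
    (V : Set X) (hV : V.Finite)
    (γ : X → Option A) (hγdom : dom γ = V)
    (hsat : sat (union σ γ) g) :
    ∃ γ' : X → Option A, dom γ' = V ∧ codom γ' ⊆ S₂ ∧
      sat (union σ' γ') g ∧ Coh C (union σ γ) (union σ' γ') := by
  obtain ⟨f, hfix, hinj, rfl⟩ := hcoh.exists_eq_comp_map
  rw [codom_comp_map] at hσ'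
  obtain ⟨hCS₁, hCS₂⟩ : C ⊆ S₁ ∧ C ⊆ S₂ := hC ▸ ⟨inter_subset_left, inter_subset_right⟩
  obtain ⟨f', hf'f, hinj', hmaps⟩ := exists_injOn_extension_of_infinite hfix hinj (D := codom γ)
    (codom_finite (hγdom ▸ hV)) (hinf.sdiff ((codom_finite hfin).image f))
    (disjoint_left.mpr fun a ha haC => ha.1.2 (hCS₁ haC)) disjoint_sdiff_left
  have hfix' : EqOn f' id C := fun a ha => (hf'f (Or.inr ha)).trans (hfix ha)
  have hunion : union (Option.map f ∘ σ) (Option.map f' ∘ γ) = Option.map f' ∘ union σ γ := by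
    rw [comp_map_congr (hf'f.mono subset_union_left).symm, union_comp_map]
  refine ⟨Option.map f' ∘ γ, by rw [dom_comp_map, hγdom], ?_, ?_, ?_⟩
  · rw [codom_comp_map]
    exact hmaps.image_subset.trans (union_subset (union_subset hσ' hCS₂) fun a ha => ha.1.1)
  · exact hunion ▸ sat_comp_map (hfix'.mono hc) hsat
  · refine hunion ▸ coh_comp_map hfix' (hinj'.mono ?_)
    exact (union_subset_union_left C (codom_union_subset σ γ)).trans (union_right_comm ..).le

/-- Guard-preserving extension. -/
theorem stmt_14 {X A : Type*} (S₁ S₂ : Set A) (C : Set A) (hC : C = S₁ ∩ S₂)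
    (hinf : (S₂ \ S₁).Infinite)
    (σ σ' : X → Option A)
    (hσ : codom σ ⊆ S₁) (hσ' : codom σ' ⊆ S₂)
    (hfin : (dom σ).Finite)
    (hcoh : Coh C σ σ')
    (g : Guard X A) (hc : gconsts g ⊆ C)
    (V : Set X) (hV : V.Finite) (hVdisj : V ∩ dom σ = ∅)
    (hv : gvars g ⊆ dom σ ∪ V)
    (γ : X → Option A) (hγdom : dom γ = V) (hγcod : codom γ ⊆ S₁)
    (hsat : sat (union σ γ) g) :
    ∃ γ' : X → Option A, dom γ' = V ∧ codom γ' ⊆ S₂ ∧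
      sat (union σ' γ') g ∧ Coh C (union σ γ) (union σ' γ') :=
  stmt_14_general S₁ S₂ C hC hinf σ σ' hσ' hfin hcoh g hc V hV γ hγdom hsat
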